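/- arXiv:1511.08511 — 4 statements merged into one kernel-verified Lean document; each statement's English description precedes it below -/
import Mathlib

section
/- The set V_B = { u ∈ H¹(0,1) : u(0) = 0 and ∑_{b∈B} u(b)² < ∞ }, equipped with the inner product ⟨u,v⟩ = ∫₀¹ u' v' + ∑_{b∈B} u(b) v(b), is a Hilbert space (i.e., it is complete). -/
/-!
The map `u ↦ (u', (u b)_{b ∈ B})` is an isometry from `V_B` into `L²(0,1) ⊕₂ ℓ²(B)`, which is
complete, so a Cauchy sequence in `V_B` has a limit `(f, S)` there. Since
`u(b) = ⟪𝟙_(0,b), u'⟫` is continuous in `u'` for `b ∈ [0,1]`, the primitive `v` of `f` satisfies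
`v(b) = S(b)` on `B`, hence `v ∈ V_B` and `u_n → v`.
-/

open MeasureTheory Filter Set Topology

theorem Metric.cauchySeq_of_dist_sq_lt {X : Type*} [PseudoMetricSpace X] {x : ℕ → X}
    (h : ∀ ε > 0, ∃ N, ∀ m ≥ N, ∀ n ≥ N, dist (x m) (x n) ^ 2 < ε) : CauchySeq x := by
  refine Metric.cauchySeq_iff.2 fun ε hε => ?_
  obtain ⟨N, hN⟩ := h (ε ^ 2) (by positivity)
  exact ⟨N, fun m hm n hn => lt_of_pow_lt_pow_left₀ 2 hε.le (hN m hm n hn)⟩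

theorem MeasureTheory.integral_sq_sub_eq_dist_toLp_sq {α : Type*} [MeasurableSpace α]
    {μ : Measure α} {f g : α → ℝ} (hf : MemLp f 2 μ) (hg : MemLp g 2 μ) :
    ∫ x, (f x - g x) ^ 2 ∂μ = dist (hf.toLp f) (hg.toLp g) ^ 2 := by
  rw [dist_eq_norm, ← MemLp.toLp_sub, ← real_inner_self_eq_norm_sq, L2.inner_def]
  refine integral_congr_ae ?_
  filter_upwards [(hf.sub hg).coeFn_toLp] with x hx
  simp [hx, sq]

theorem lp.tsum_sq_sub_eq_dist_sq {ι : Type*} (s t : lp (fun _ : ι => ℝ) 2) :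
    ∑' i, (s i - t i) ^ 2 = dist s t ^ 2 := by
  rw [dist_eq_norm, ← real_inner_self_eq_norm_sq, lp.inner_eq_tsum]
  simp [sq]

theorem memℓp_two_iff_summable_sq {ι : Type*} {f : ι → ℝ} :
    Memℓp f 2 ↔ Summable fun i => f i ^ 2 := by
  simp [memℓp_gen_iff (p := 2) (by norm_num)]

theorem integral_sq_sub_add_tsum_sq_sub_eq_dist_sq {α ι : Type*} [MeasurableSpace α]
    {μ : Measure α} {f g : α → ℝ} (hf : MemLp f 2 μ) (hg : MemLp g 2 μ)
    (s t : lp (fun _ : ι => ℝ) 2) :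
    ∫ x, (f x - g x) ^ 2 ∂μ + ∑' i, (s i - t i) ^ 2
      = dist (WithLp.toLp 2 (hf.toLp f, s)) (WithLp.toLp 2 (hg.toLp g, t)) ^ 2 := by
  rw [WithLp.prod_dist_eq_of_L2, Real.sq_sqrt (by positivity),
    integral_sq_sub_eq_dist_toLp_sq hf hg, lp.tsum_sq_sub_eq_dist_sq]
  rfl

theorem tendsto_intervalIntegral_of_tendsto_toLp {ι : Type*} {l : Filter ι} {a b c : ℝ}
    (hab : a ≤ b) (hbc : b ≤ c) {w : ι → ℝ → ℝ} {g : ℝ → ℝ}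
    (hw : ∀ i, MemLp (w i) 2 (volume.restrict (Ioo a c)))
    (hg : MemLp g 2 (volume.restrict (Ioo a c)))
    (h : Tendsto (fun i => (hw i).toLp (w i)) l (𝓝 (hg.toLp g))) :
    Tendsto (fun i => ∫ t in a..b, w i t) l (𝓝 (∫ t in a..b, g t)) := by
  have hfin : volume.restrict (Ioo a c) (Ioo a b) ≠ ⊤ := by finiteness
  set χ := indicatorConstLp 2 measurableSet_Ioo hfin (1 : ℝ)
  have integral_eq_inner : ∀ (f : ℝ → ℝ) (hf : MemLp f 2 (volume.restrict (Ioo a c))),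
      ∫ t in a..b, f t = inner ℝ χ (hf.toLp f) := by
    intro f hf
    rw [L2.inner_indicatorConstLp_one, integral_congr_ae (ae_restrict_of_ae hf.coeFn_toLp),
      Measure.restrict_restrict measurableSet_Ioo,
      inter_eq_left.2 (Ioo_subset_Ioo_right hbc), intervalIntegral.integral_of_le hab,
      integral_Ioc_eq_integral_Ioo]
  simp_rw [integral_eq_inner _ (hw _), integral_eq_inner g hg]
  exact tendsto_const_nhds.inner h

theorem stmt2_general (B : Set ℝ) (hB : B ⊆ Set.Icc (0:ℝ) 1)
    (u du : ℕ → ℝ → ℝ)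
    (hmem : ∀ n, MemLp (du n) 2 (volume.restrict (Set.Ioo (0:ℝ) 1)))
    (hrep : ∀ n x, u n x = ∫ t in (0:ℝ)..x, du n t)
    (hsum : ∀ n, Summable (fun b : B => (u n (b : ℝ))^2))
    (hcauchy : ∀ ε > (0:ℝ), ∃ N : ℕ, ∀ m ≥ N, ∀ n ≥ N,
      (∫ x in Set.Ioo (0:ℝ) 1, (du m x - du n x)^2)
        + (∑' b : B, (u m (b : ℝ) - u n (b : ℝ))^2) < ε) :
    ∃ v dv : ℝ → ℝ,
      MemLp dv 2 (volume.restrict (Set.Ioo (0:ℝ) 1)) ∧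
      (∀ x, v x = ∫ t in (0:ℝ)..x, dv t) ∧
      Summable (fun b : B => (v (b : ℝ))^2) ∧
      Tendsto (fun n => (∫ x in Set.Ioo (0:ℝ) 1, (du n x - dv x)^2)
        + ∑' b : B, (u n (b : ℝ) - v (b : ℝ))^2) atTop (𝓝 0) := by
  let trace : ℕ → lp (fun _ : B => ℝ) 2 := fun n =>
    ⟨fun b => u n b, memℓp_two_iff_summable_sq.2 (hsum n)⟩
  let Φ : ℕ → WithLp 2 (Lp ℝ 2 (volume.restrict (Ioo (0:ℝ) 1)) × lp (fun _ : B => ℝ) 2) :=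
    fun n => WithLp.toLp 2 ((hmem n).toLp (du n), trace n)
  have hΦ : CauchySeq Φ := Metric.cauchySeq_of_dist_sq_lt fun ε hε => by
    simpa only [Φ, ← integral_sq_sub_add_tsum_sq_sub_eq_dist_sq] using hcauchy ε hε
  obtain ⟨⟨f, S⟩, hlim⟩ := cauchySeq_tendsto_of_complete hΦ
  set v : ℝ → ℝ := fun x => ∫ t in (0:ℝ)..x, f t
  have hu_S : ∀ b : B, Tendsto (fun n => u n b) atTop (𝓝 (S b)) := fun b =>
    (lp.evalCLM ℝ _ 2 b).continuous.tendsto S |>.comp <|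
      (WithLp.continuous_snd ..).tendsto _ |>.comp hlim
  have hu_v : ∀ x ∈ Icc (0:ℝ) 1, Tendsto (fun n => u n x) atTop (𝓝 (v x)) := fun x hx => by
    simp_rw [hrep]
    refine tendsto_intervalIntegral_of_tendsto_toLp hx.1 hx.2 hmem (Lp.memLp f) ?_
    rw [Lp.toLp_coeFn]
    exact (WithLp.continuous_fst ..).tendsto _ |>.comp hlim
  have hfS : ∀ b : B, S b = v b := fun b => tendsto_nhds_unique (hu_S b) (hu_v b (hB b.2))
  refine ⟨v, f, Lp.memLp f, fun _ => rfl, ?_, ?_⟩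
  · simpa only [hfS] using memℓp_two_iff_summable_sq.1 S.2
  · have henergy : ∀ n, (∫ x in Ioo (0:ℝ) 1, (du n x - f x) ^ 2)
        + ∑' b : B, (u n b - v b) ^ 2 = dist (Φ n) (WithLp.toLp 2 (f, S)) ^ 2 := fun n => by
      simp_rw [← hfS]
      rw [integral_sq_sub_add_tsum_sq_sub_eq_dist_sq (hmem n) (Lp.memLp f) (trace n) S,
        Lp.toLp_coeFn]
    simpa [henergy] using (tendsto_iff_dist_tendsto_zero.1 hlim).pow 2

/-- Completeness of the fractal interface space
V_B = { u ∈ H¹(0,1) : u(0) = 0, ∑_{b∈B} u(b)² < ∞ } with the norm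
‖u‖² = ∫₀¹ (u')² + ∑_{b∈B} u(b)²: every Cauchy sequence has a limit in V_B. -/
theorem stmt2 (B : Set ℝ) (hBcount : B.Countable) (hB : B ⊆ Set.Icc (0:ℝ) 1)
    (u du : ℕ → ℝ → ℝ)
    (hmem : ∀ n, MemLp (du n) 2 (volume.restrict (Set.Ioo (0:ℝ) 1)))
    (hrep : ∀ n x, u n x = ∫ t in (0:ℝ)..x, du n t)
    (hsum : ∀ n, Summable (fun b : B => (u n (b : ℝ))^2))
    (hcauchy : ∀ ε > (0:ℝ), ∃ N : ℕ, ∀ m ≥ N, ∀ n ≥ N,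
      (∫ x in Set.Ioo (0:ℝ) 1, (du m x - du n x)^2)
        + (∑' b : B, (u m (b : ℝ) - u n (b : ℝ))^2) < ε) :
    ∃ v dv : ℝ → ℝ,
      MemLp dv 2 (volume.restrict (Set.Ioo (0:ℝ) 1)) ∧
      (∀ x, v x = ∫ t in (0:ℝ)..x, dv t) ∧
      Summable (fun b : B => (v (b : ℝ))^2) ∧
      Tendsto (fun n => (∫ x in Set.Ioo (0:ℝ) 1, (du n x - dv x)^2)
        + ∑' b : B, (u n (b : ℝ) - v (b : ℝ))^2) atTop (𝓝 0) :=
  stmt2_general B hB u du hmem hrep hsum hcauchy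
end

section
/- With V = {u ∈ H¹(0,1) : u(0)=0}, let B_n ⊆ (0,1) be finite, β > 0, F ∈ L²(0,1), f : B → ℝ with ∑_{b∈B} f(b)² < ∞ where B ⊇ B_n. If p_n ∈ V solves ∫₀¹ p_n' q' + β ∑_{b∈B_n} p_n(b) q(b) = ∫₀¹ F q + ∑_{b∈B_n} f(b) q(b) for all q ∈ V, then both ‖p_n‖_V and (∑_{b∈B_n} p_n(b)²)^{1/2} are bounded by (1/min{1,β}) (‖F‖²_{L²(0,1)} + ‖f‖²_{ℓ²(B)})^{1/2}. -/
/-!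
Test the variational equation with `q = p`: the left side becomes `‖p'‖² + β ∑ p(b)²`, which
dominates `min 1 β` times the squared norm `‖p'‖² + ∑ p(b)²` of the pair `(p, p|_{B_n})`. The
right side is bounded by Cauchy–Schwarz, in `L²(0,1)` and in `ℓ²(B_n)`, by
`(‖F‖² + ‖f‖²)^{1/2}` times the same norm, once `‖p‖_{L²} ≤ ‖p'‖_{L²}`, which holds because
`|p(x)| ≤ √x ‖p'‖_{L²}` for the primitive `p` of `p'`.
-/

open MeasureTheory Set

lemma integral_mul_le_sqrt_mul_sqrt {α : Type*} {m : MeasurableSpace α} {μ : Measure α}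
    {f g : α → ℝ} (hf : MemLp f 2 μ) (hg : MemLp g 2 μ) :
    ∫ x, f x * g x ∂μ ≤ √(∫ x, f x ^ 2 ∂μ) * √(∫ x, g x ^ 2 ∂μ) := by
  have holder := integral_mul_norm_le_Lp_mul_Lq Real.HolderConjugate.two_two
    (by simpa using hf) (by simpa using hg)
  simp only [Real.rpow_two, Real.norm_eq_abs, sq_abs, ← Real.sqrt_eq_rpow] at holder
  calc ∫ x, f x * g x ∂μ ≤ |∫ x, f x * g x ∂μ| := le_abs_self _
    _ ≤ ∫ x, |f x * g x| ∂μ := abs_integral_le_integral_abs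
    _ = ∫ x, |f x| * |g x| ∂μ := by simp only [abs_mul]
    _ ≤ _ := holder

lemma abs_intervalIntegral_le_sqrt_mul_sqrt {g : ℝ → ℝ} {a b : ℝ} (hab : a ≤ b)
    (hg : MemLp g 2 (volume.restrict (Ioc a b))) :
    |∫ t in a..b, g t| ≤ √(b - a) * √(∫ t in Ioc a b, g t ^ 2) := by
  calc |∫ t in a..b, g t| ≤ ∫ t in a..b, |g t| := intervalIntegral.abs_integral_le_integral_abs hab
    _ = ∫ t in Ioc a b, |g t| * 1 := by simp [intervalIntegral.integral_of_le hab]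
    _ ≤ √(∫ t in Ioc a b, |g t| ^ 2) * √(∫ t in Ioc a b, (1 : ℝ) ^ 2) :=
        integral_mul_le_sqrt_mul_sqrt hg.abs (memLp_const 1)
    _ = √(b - a) * √(∫ t in Ioc a b, g t ^ 2) := by simp [sq_abs, hab, mul_comm]

lemma abs_primitive_le_sqrt_mul_sqrt {g : ℝ → ℝ} {a b x : ℝ}
    (hg : MemLp g 2 (volume.restrict (Ioo a b))) (hx : x ∈ Icc a b) :
    |∫ t in a..x, g t| ≤ √(b - a) * √(∫ t in Ioo a b, g t ^ 2) := by
  have hsub : Ioc a x ≤ᵐ[volume] Ioo a b :=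
    (Ioc_subset_Ioc_right hx.2).eventuallyLE.trans Ioo_ae_eq_Ioc.symm.le
  calc |∫ t in a..x, g t| ≤ √(x - a) * √(∫ t in Ioc a x, g t ^ 2) :=
        abs_intervalIntegral_le_sqrt_mul_sqrt hx.1 (hg.mono_measure (Measure.restrict_mono_ae hsub))
    _ ≤ √(b - a) * √(∫ t in Ioo a b, g t ^ 2) := by
        refine mul_le_mul (Real.sqrt_le_sqrt (by linarith [hx.2])) (Real.sqrt_le_sqrt ?_)
          (Real.sqrt_nonneg _) (Real.sqrt_nonneg _)
        exact setIntegral_mono_set hg.integrable_sq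
          (Filter.Eventually.of_forall fun t => sq_nonneg (g t)) hsub

lemma memLp_primitive {g : ℝ → ℝ} {a b : ℝ} (hab : a ≤ b)
    (hg : MemLp g 2 (volume.restrict (Ioo a b))) :
    MemLp (fun x => ∫ t in a..x, g t) 2 (volume.restrict (Ioo a b)) := by
  have hint : IntegrableOn g (uIcc a b) :=
    by
    rw [uIcc_of_le hab]
    exact IntegrableOn.congr_set_ae (hg.integrable one_le_two) Ioo_ae_eq_Icc.symm
  have hcont := intervalIntegral.continuousOn_primitive_interval hint
  rw [uIcc_of_le hab] at hcont
  refine MemLp.of_bound ((hcont.mono Ioo_subset_Icc_self).aestronglyMeasurable measurableSet_Ioo)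
    (√(b - a) * √(∫ t in Ioo a b, g t ^ 2)) ?_
  filter_upwards [ae_restrict_mem measurableSet_Ioo] with x hx
  exact abs_primitive_le_sqrt_mul_sqrt hg (Ioo_subset_Icc_self hx)

lemma integral_sq_primitive_le {g : ℝ → ℝ} {a b : ℝ} (hab : a ≤ b)
    (hg : MemLp g 2 (volume.restrict (Ioo a b))) :
    ∫ x in Ioo a b, (∫ t in a..x, g t) ^ 2 ≤ (b - a) ^ 2 * ∫ t in Ioo a b, g t ^ 2 := by
  set G := ∫ t in Ioo a b, g t ^ 2
  have hG : 0 ≤ G := setIntegral_nonneg measurableSet_Ioo fun t _ => sq_nonneg (g t)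
  calc ∫ x in Ioo a b, (∫ t in a..x, g t) ^ 2 ≤ ∫ _ in Ioo a b, (b - a) * G := by
        refine setIntegral_mono_on (memLp_primitive hab hg).integrable_sq
          (integrableOn_const (by simp)) measurableSet_Ioo fun x hx => ?_
        calc (∫ t in a..x, g t) ^ 2 = |∫ t in a..x, g t| ^ 2 := (sq_abs _).symm
          _ ≤ (√(b - a) * √G) ^ 2 := by
              gcongr; exact abs_primitive_le_sqrt_mul_sqrt hg (Ioo_subset_Icc_self hx)
          _ = (b - a) * G := by rw [mul_pow, Real.sq_sqrt (sub_nonneg.2 hab), Real.sq_sqrt hG]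
    _ = (b - a) ^ 2 * G := by simp [hab]; ring

lemma Finset.sum_le_tsum_of_coe_subset {α M : Type*} [AddCommMonoid M] [PartialOrder M]
    [IsOrderedAddMonoid M] [TopologicalSpace M] [OrderClosedTopology M]
    {B : Set α} {s : Finset α} (hs : ↑s ⊆ B) {g : α → M} (hg : ∀ b ∈ B, 0 ≤ g b)
    (hsum : Summable fun b : B => g b) :
    ∑ b ∈ s, g b ≤ ∑' b : B, g b := by
  classical
  rw [← Finset.sum_subtype_of_mem g (p := (· ∈ B)) hs]
  exact hsum.sum_le_tsum _ fun b _ => hg b b.2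

lemma sqrt_mul_sqrt_add_sqrt_mul_sqrt_le {a b c d : ℝ} (ha : 0 ≤ a) (hb : 0 ≤ b) (hc : 0 ≤ c)
    (hd : 0 ≤ d) : √a * √b + √c * √d ≤ √(a + c) * √(b + d) := by
  simpa [Fin.sum_univ_two] using Real.sum_sqrt_mul_sqrt_le Finset.univ (f := ![a, c])
    (g := ![b, d]) (by simp [Fin.forall_fin_two, ha, hc]) (by simp [Fin.forall_fin_two, hb, hd])

lemma sqrt_add_le_of_add_mul_le_mul_sqrt {X S β K : ℝ} (hX : 0 ≤ X) (hS : 0 ≤ S) (hβ : 0 < β) (hK : 0 ≤ K)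
    (h : X + β * S ≤ K * √(X + S)) : √(X + S) ≤ 1 / min 1 β * K := by
  have hm : 0 < min 1 β := lt_min one_pos hβ
  have hmin : min 1 β * (X + S) ≤ X + β * S := by
    nlinarith [min_le_left 1 β, min_le_right 1 β]
  rw [one_div_mul_eq_div, le_div_iff₀ hm]
  rcases (Real.sqrt_nonneg (X + S)).eq_or_lt with h0 | h0
  · rw [← h0, zero_mul]; exact hK
  · refine le_of_mul_le_mul_right ?_ h0
    calc √(X + S) * min 1 β * √(X + S) = min 1 β * (X + S) := by
          rw [mul_right_comm, Real.mul_self_sqrt (add_nonneg hX hS), mul_comm]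
      _ ≤ K * √(X + S) := hmin.trans h

theorem stmt6_general (B : Set ℝ)
    (Bn : Finset ℝ) (hBn : ↑Bn ⊆ B) (β : ℝ) (hβ : 0 < β)
    (F : ℝ → ℝ) (hF : MemLp F 2 (volume.restrict (Set.Ioo (0:ℝ) 1)))
    (f : ℝ → ℝ) (hf : Summable (fun b : B => (f (b : ℝ))^2))
    (p p' : ℝ → ℝ)
    (hmem : MemLp p' 2 (volume.restrict (Set.Ioo (0:ℝ) 1)))
    (hrep : ∀ x, p x = ∫ t in (0:ℝ)..x, p' t)
    (hsol : ∀ q q' : ℝ → ℝ, MemLp q' 2 (volume.restrict (Set.Ioo (0:ℝ) 1)) →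
      (∀ x, q x = ∫ t in (0:ℝ)..x, q' t) →
      (∫ x in Set.Ioo (0:ℝ) 1, p' x * q' x) + β * ∑ b ∈ Bn, p b * q b
        = (∫ x in Set.Ioo (0:ℝ) 1, F x * q x) + ∑ b ∈ Bn, f b * q b) :
    Real.sqrt (∫ x in Set.Ioo (0:ℝ) 1, (p' x)^2)
        ≤ (1 / min 1 β) * Real.sqrt ((∫ x in Set.Ioo (0:ℝ) 1, (F x)^2)
            + ∑' b : B, (f (b : ℝ))^2) ∧
    Real.sqrt (∑ b ∈ Bn, (p b)^2)
        ≤ (1 / min 1 β) * Real.sqrt ((∫ x in Set.Ioo (0:ℝ) 1, (F x)^2)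
            + ∑' b : B, (f (b : ℝ))^2) := by
  have hp : p = fun x => ∫ t in (0:ℝ)..x, p' t := funext hrep
  set X := ∫ x in Ioo (0:ℝ) 1, p' x ^ 2
  set S := ∑ b ∈ Bn, p b ^ 2
  set A := ∫ x in Ioo (0:ℝ) 1, F x ^ 2
  set C := ∑' b : B, f b ^ 2
  have hX : 0 ≤ X := setIntegral_nonneg measurableSet_Ioo fun x _ => sq_nonneg (p' x)
  have hS : 0 ≤ S := Finset.sum_nonneg fun b _ => sq_nonneg (p b)
  have hpL2 : MemLp p 2 (volume.restrict (Ioo 0 1)) := hp ▸ memLp_primitive zero_le_one hmem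
  have hpX : ∫ x in Ioo (0:ℝ) 1, p x ^ 2 ≤ X := by
    simpa [hp] using integral_sq_primitive_le zero_le_one hmem
  have hfC : ∑ b ∈ Bn, f b ^ 2 ≤ C :=
    Finset.sum_le_tsum_of_coe_subset hBn (fun b _ => sq_nonneg (f b)) hf
  have energy : X + β * S ≤ √(A + C) * √(X + S) :=
    calc X + β * S = (∫ x in Ioo (0:ℝ) 1, F x * p x) + ∑ b ∈ Bn, f b * p b := by
          simpa only [← sq] using hsol p p' hmem hrep
      _ ≤ √A * √(∫ x in Ioo (0:ℝ) 1, p x ^ 2) + √(∑ b ∈ Bn, f b ^ 2) * √S :=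
          add_le_add (integral_mul_le_sqrt_mul_sqrt hF hpL2) (Real.sum_mul_le_sqrt_mul_sqrt _ _ _)
      _ ≤ √A * √X + √C * √S := by gcongr
      _ ≤ √(A + C) * √(X + S) :=
          sqrt_mul_sqrt_add_sqrt_mul_sqrt_le (setIntegral_nonneg measurableSet_Ioo
            fun x _ => sq_nonneg (F x)) hX (tsum_nonneg fun b => sq_nonneg (f b)) hS
  have bound := sqrt_add_le_of_add_mul_le_mul_sqrt hX hS hβ (Real.sqrt_nonneg _) energy
  exact ⟨(Real.sqrt_le_sqrt (by linarith)).trans bound,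
    (Real.sqrt_le_sqrt (by linarith)).trans bound⟩

/-- a priori estimate for the n-stage problem: both the V-norm of p_n and the
ℓ²-norm of its trace on B_n are bounded by (1/min{1,β})·(‖F‖²_{L²} + ‖f‖²_{ℓ²(B)})^{1/2}. -/
theorem stmt6 (B : Set ℝ) (hB : B ⊆ Set.Ioo (0:ℝ) 1)
    (Bn : Finset ℝ) (hBn : ↑Bn ⊆ B) (β : ℝ) (hβ : 0 < β)
    (F : ℝ → ℝ) (hF : MemLp F 2 (volume.restrict (Set.Ioo (0:ℝ) 1)))
    (f : ℝ → ℝ) (hf : Summable (fun b : B => (f (b : ℝ))^2))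
    (p p' : ℝ → ℝ)
    (hmem : MemLp p' 2 (volume.restrict (Set.Ioo (0:ℝ) 1)))
    (hrep : ∀ x, p x = ∫ t in (0:ℝ)..x, p' t)
    (hsol : ∀ q q' : ℝ → ℝ, MemLp q' 2 (volume.restrict (Set.Ioo (0:ℝ) 1)) →
      (∀ x, q x = ∫ t in (0:ℝ)..x, q' t) →
      (∫ x in Set.Ioo (0:ℝ) 1, p' x * q' x) + β * ∑ b ∈ Bn, p b * q b
        = (∫ x in Set.Ioo (0:ℝ) 1, F x * q x) + ∑ b ∈ Bn, f b * q b) :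
    Real.sqrt (∫ x in Set.Ioo (0:ℝ) 1, (p' x)^2)
        ≤ (1 / min 1 β) * Real.sqrt ((∫ x in Set.Ioo (0:ℝ) 1, (F x)^2)
            + ∑' b : B, (f (b : ℝ))^2) ∧
    Real.sqrt (∑ b ∈ Bn, (p b)^2)
        ≤ (1 / min 1 β) * Real.sqrt ((∫ x in Set.Ioo (0:ℝ) 1, (F x)^2)
            + ∑' b : B, (f (b : ℝ))^2) :=
  stmt6_general B Bn hBn β hβ F hF f hf p p' hmem hrep hsol
end

section
/- Let B be a countable subset of (0,1) and suppose (p_n) ⊆ V = {u ∈ H¹(0,1): u(0)=0} converges weakly in V to ξ ∈ V; suppose in addition that B_n ↑ B are finite subsets and that the traces satisfy sup_n ∑_{b∈B_n} p_n(b)² < ∞. Then ∑_{b∈B} ξ(b)² < ∞ and, for every u ∈ ℓ²(B), ∑_{b∈B_n} p_n(b) u(b) → ∑_{b∈B} ξ(b) u(b). -/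
/-!
Testing the weak convergence against the indicator of `(0, b)` shows `p n b → ξ b` for every
`b ∈ B`. Hence every finite partial sum of `ξ(b)²` over `B` is a limit of sums bounded by `C`,
so `ξ|_B ∈ ℓ²(B)`. For the convergence of `∑_{B_n} p_n u`, cut `u` off outside a finite set `t`:
by Cauchy–Schwarz the error is at most `√(C · ∑_{b ∉ t} u(b)²)`, uniformly in `n`, while the
truncated sums converge because only finitely many points are involved; the Moore–Osgood
theorem on exchanging limits concludes.
-/

open MeasureTheory Filter Set Topology Finset

section WeakConvergence

variable {a b c : ℝ}

lemma setIntegral_Ioo_mul_indicator_eq_intervalIntegral (hab : a ≤ b) (hbc : b ≤ c)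
    (f : ℝ → ℝ) :
    ∫ x in Ioo a c, f x * (Ioo a b).indicator (fun _ => 1) x = ∫ t in a..b, f t := by
  have hf : (fun x => f x * (Ioo a b).indicator (fun _ => 1) x) = (Ioo a b).indicator f := by
    funext x
    by_cases hx : x ∈ Ioo a b <;> simp [hx]
  rw [hf, integral_indicator measurableSet_Ioo, Measure.restrict_restrict measurableSet_Ioo,
    inter_eq_left.mpr (Ioo_subset_Ioo_right hbc), intervalIntegral.integral_of_le hab,
    integral_Ioc_eq_integral_Ioo]

lemma tendsto_intervalIntegral_of_weakly_tendsto {α : Type*} {l : Filter α}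
    {f : α → ℝ → ℝ} {g : ℝ → ℝ}
    (hweak : ∀ φ : ℝ → ℝ, MemLp φ 2 (volume.restrict (Ioo a c)) →
      Tendsto (fun n => ∫ x in Ioo a c, f n x * φ x) l (𝓝 (∫ x in Ioo a c, g x * φ x)))
    (hab : a ≤ b) (hbc : b ≤ c) :
    Tendsto (fun n => ∫ t in a..b, f n t) l (𝓝 (∫ t in a..b, g t)) := by
  have hφ : MemLp ((Ioo a b).indicator fun _ => (1 : ℝ)) 2 (volume.restrict (Ioo a c)) :=
    memLp_indicator_const 2 measurableSet_Ioo 1 (Or.inr (measure_ne_top _ _))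
  simpa only [setIntegral_Ioo_mul_indicator_eq_intervalIntegral hab hbc] using hweak _ hφ

end WeakConvergence

section SquareSummable

variable {ι α : Type*} {l : Filter α} {s : α → Finset ι} {a : α → ι → ℝ} {x u : ι → ℝ} {C : ℝ}

lemma sum_sq_le_of_tendsto [l.NeBot] (hs : Tendsto s l atTop)
    (ha : ∀ i, Tendsto (a · i) l (𝓝 (x i))) (hC : ∀ n, ∑ i ∈ s n, a n i ^ 2 ≤ C)
    (t : Finset ι) : ∑ i ∈ t, x i ^ 2 ≤ C := by
  refine le_of_tendsto (tendsto_finsetSum t fun i _ => (ha i).pow 2) ?_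
  filter_upwards [hs.eventually_ge_atTop t] with n hn
  exact (sum_le_sum_of_subset_of_nonneg hn fun _ _ _ => sq_nonneg _).trans (hC n)

lemma summable_sq_of_tendsto [l.NeBot] (hs : Tendsto s l atTop)
    (ha : ∀ i, Tendsto (a · i) l (𝓝 (x i))) (hC : ∀ n, ∑ i ∈ s n, a n i ^ 2 ≤ C) :
    Summable fun i => x i ^ 2 :=
  summable_of_sum_le (fun _ => sq_nonneg _) (sum_sq_le_of_tendsto hs ha hC)

lemma summable_mul_of_summable_sq (hx : Summable fun i => x i ^ 2)
    (hu : Summable fun i => u i ^ 2) : Summable fun i => x i * u i :=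
  (hx.add hu).of_norm_bounded fun i => by
    rw [Real.norm_eq_abs, abs_mul]
    nlinarith [sq_nonneg (|x i| - |u i|), sq_abs (x i), sq_abs (u i)]

lemma sum_sq_le_tsum_sub_of_disjoint (hu : Summable fun i => u i ^ 2) {r t : Finset ι}
    (hrt : Disjoint r t) : ∑ i ∈ r, u i ^ 2 ≤ ∑' i, u i ^ 2 - ∑ i ∈ t, u i ^ 2 := by
  classical
  have h := sum_le_hasSum (t ∪ r) (fun i _ => sq_nonneg (u i)) hu.hasSum
  rw [sum_union hrt.symm] at h
  linarith

lemma abs_sum_sdiff_mul_le [DecidableEq ι] (hu : Summable fun i => u i ^ 2) {r : Finset ι} {v : ι → ℝ}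
    (hC : ∑ i ∈ r, v i ^ 2 ≤ C) (t : Finset ι) :
    |∑ i ∈ r \ t, v i * u i| ≤ √(C * (∑' i, u i ^ 2 - ∑ i ∈ t, u i ^ 2)) := by
  have hC₀ : 0 ≤ C := (sum_nonneg fun i _ => sq_nonneg (v i)).trans hC
  apply Real.abs_le_sqrt
  calc (∑ i ∈ r \ t, v i * u i) ^ 2
      ≤ (∑ i ∈ r \ t, v i ^ 2) * ∑ i ∈ r \ t, u i ^ 2 := sum_mul_sq_le_sq_mul_sq _ _ _
    _ ≤ C * (∑' i, u i ^ 2 - ∑ i ∈ t, u i ^ 2) :=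
      mul_le_mul ((sum_le_sum_of_subset_of_nonneg sdiff_subset fun i _ _ => sq_nonneg _).trans hC)
        (sum_sq_le_tsum_sub_of_disjoint hu sdiff_disjoint) (sum_nonneg fun i _ => sq_nonneg _) hC₀

theorem tendsto_sum_mul_of_tendsto [l.NeBot] (hs : Tendsto s l atTop)
    (ha : ∀ i, Tendsto (a · i) l (𝓝 (x i))) (hC : ∀ n, ∑ i ∈ s n, a n i ^ 2 ≤ C)
    (hu : Summable fun i => u i ^ 2) :
    Tendsto (fun n => ∑ i ∈ s n, a n i * u i) l (𝓝 (∑' i, x i * u i)) := by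
  classical
  have htail : Tendsto (fun t => √(C * (∑' i, u i ^ 2 - ∑ i ∈ t, u i ^ 2))) atTop (𝓝 0) := by
    have h := (((tendsto_const_nhds (x := ∑' i, u i ^ 2)).sub hu.hasSum).const_mul C).sqrt
    rwa [sub_self, mul_zero, Real.sqrt_zero] at h
  have hunif : TendstoUniformly (fun t n => ∑ i ∈ s n ∩ t, a n i * u i)
      (fun n => ∑ i ∈ s n, a n i * u i) atTop := by
    rw [Metric.tendstoUniformly_iff]
    intro ε hε
    filter_upwards [htail.eventually (gt_mem_nhds hε)] with t ht n
    rw [Real.dist_eq, ← sum_inter_add_sum_sdiff (s n) t, add_sub_cancel_left]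
    exact (abs_sum_sdiff_mul_le hu (hC n) t).trans_lt ht
  have htrunc : ∀ t, Tendsto (fun n => ∑ i ∈ s n ∩ t, a n i * u i) l
      (𝓝 (∑ i ∈ t, x i * u i)) := fun t =>
    (tendsto_finsetSum t fun i _ => (ha i).mul_const (u i)).congr'
      (by filter_upwards [hs.eventually_ge_atTop t] with n hn; rw [Finset.inter_eq_right.mpr hn])
  exact hunif.tendsto_of_eventually_tendsto (Eventually.of_forall htrunc)
    (summable_mul_of_summable_sq (summable_sq_of_tendsto hs ha hC) hu).hasSum

end SquareSummable

theorem stmt7_general (B : Set ℝ) (hB : B ⊆ Set.Ioo (0:ℝ) 1)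
    (Bn : ℕ → Finset ℝ) (hmono : Monotone Bn)
    (hsub : ∀ n, ↑(Bn n) ⊆ B) (hcover : ∀ b ∈ B, ∃ n, b ∈ Bn n)
    (p : ℕ → ℝ → ℝ) (dp : ℕ → ℝ → ℝ)
    (hrep : ∀ n x, p n x = ∫ t in (0:ℝ)..x, dp n t)
    (ξ ξ' : ℝ → ℝ)
    (hξrep : ∀ x, ξ x = ∫ t in (0:ℝ)..x, ξ' t)
    (hweak : ∀ g : ℝ → ℝ, MemLp g 2 (volume.restrict (Set.Ioo (0:ℝ) 1)) →
      Tendsto (fun n => ∫ x in Set.Ioo (0:ℝ) 1, dp n x * g x) atTop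
        (𝓝 (∫ x in Set.Ioo (0:ℝ) 1, ξ' x * g x)))
    (hbdd : ∃ C : ℝ, ∀ n, ∑ b ∈ Bn n, (p n b)^2 ≤ C) :
    Summable (fun b : B => (ξ (b : ℝ))^2) ∧
    ∀ u : ℝ → ℝ, Summable (fun b : B => (u (b : ℝ))^2) →
      Tendsto (fun n => ∑ b ∈ Bn n, p n b * u b) atTop
        (𝓝 (∑' b : B, ξ (b : ℝ) * u (b : ℝ))) := by
  classical
  obtain ⟨C, hC⟩ := hbdd
  let s : ℕ → Finset B := fun n => (Bn n).subtype (· ∈ B)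
  have hsum : ∀ n (f : ℝ → ℝ), ∑ b ∈ s n, f b = ∑ b ∈ Bn n, f b :=
    fun n f => sum_subtype_of_mem f (hsub n)
  have hs : Tendsto s atTop atTop :=
    tendsto_atTop_finset_of_monotone (fun m n hmn => Finset.subtype_mono (hmono hmn))
      fun b => (hcover b b.2).imp fun n hn => mem_subtype.2 hn
  have hp : ∀ b : B, Tendsto (fun n => p n b) atTop (𝓝 (ξ b)) := fun b => by
    simpa only [hrep, hξrep] using
      tendsto_intervalIntegral_of_weakly_tendsto hweak (hB b.2).1.le (hB b.2).2.le
  have hs_bdd : ∀ n, ∑ b ∈ s n, p n b ^ 2 ≤ C := fun n => (hsum n _).trans_le (hC n)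
  refine ⟨summable_sq_of_tendsto hs hp hs_bdd, fun u hu => ?_⟩
  exact (tendsto_sum_mul_of_tendsto hs hp hs_bdd hu).congr fun n => hsum n _

/-- if p_n ⇀ ξ weakly in V = {u ∈ H¹(0,1): u(0)=0}, B_n ↑ B are finite and
sup_n ∑_{b∈B_n} p_n(b)² < ∞, then ξ|_B ∈ ℓ²(B) and ∑_{b∈B_n} p_n(b)u(b) → ∑_{b∈B} ξ(b)u(b)
for every u ∈ ℓ²(B). -/
theorem stmt7 (B : Set ℝ) (hBcount : B.Countable) (hB : B ⊆ Set.Ioo (0:ℝ) 1)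
    (Bn : ℕ → Finset ℝ) (hmono : Monotone Bn)
    (hsub : ∀ n, ↑(Bn n) ⊆ B) (hcover : ∀ b ∈ B, ∃ n, b ∈ Bn n)
    (p : ℕ → ℝ → ℝ) (dp : ℕ → ℝ → ℝ)
    (hmem : ∀ n, MemLp (dp n) 2 (volume.restrict (Set.Ioo (0:ℝ) 1)))
    (hrep : ∀ n x, p n x = ∫ t in (0:ℝ)..x, dp n t)
    (ξ ξ' : ℝ → ℝ)
    (hξmem : MemLp ξ' 2 (volume.restrict (Set.Ioo (0:ℝ) 1)))
    (hξrep : ∀ x, ξ x = ∫ t in (0:ℝ)..x, ξ' t)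
    (hweak : ∀ g : ℝ → ℝ, MemLp g 2 (volume.restrict (Set.Ioo (0:ℝ) 1)) →
      Tendsto (fun n => ∫ x in Set.Ioo (0:ℝ) 1, dp n x * g x) atTop
        (𝓝 (∫ x in Set.Ioo (0:ℝ) 1, ξ' x * g x)))
    (hbdd : ∃ C : ℝ, ∀ n, ∑ b ∈ Bn n, (p n b)^2 ≤ C) :
    Summable (fun b : B => (ξ (b : ℝ))^2) ∧
    ∀ u : ℝ → ℝ, Summable (fun b : B => (u (b : ℝ))^2) →
      Tendsto (fun n => ∑ b ∈ Bn n, p n b * u b) atTop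
        (𝓝 (∑' b : B, ξ (b : ℝ) * u (b : ℝ))) :=
  stmt7_general B hB Bn hmono hsub hcover p dp hrep ξ ξ' hξrep hweak hbdd
end

section
/- Under the assumptions of the scaled-model weak formulation on (0,1) with microstructure B, let b₀ ∈ B be an isolated point of B (not an accumulation point). Then the solution p is continuous at b₀, p restricted to small intervals (b₀−δ, b₀) and (b₀, b₀+δ) has second derivative −F in L², and the one-sided derivatives satisfy the flux jump condition p'(b₀⁻) − p'(b₀⁺) + β(b₀) p(b₀) = f(b₀). -/
open MeasureTheory Filter Set Topology

/-!
Let `g x = p' x - ∫ t in x..1, F t`. Testing the weak formulation with `q x = ∫ t in 0..x, h t`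
and integrating `∫ F q` by parts (both factors are absolutely continuous primitives) turns it into
`∫₀¹ g h + ∑ β(b) p(b) q(b) = ∑ f(b) q(b)`.

On an interval free of points of `B`, every mean-zero `h ∈ L²` supported there has a primitive
vanishing on all of `B`, so `g` is orthogonal to all mean-zero functions on that interval and is
therefore a.e. constant (du Bois-Reymond). Hence `p' = m + ∫ₓ¹ F`, i.e. `-p'' = F`, on each side
of the isolated point `b₀`, with constants `m₁` on the left and `m₂` on the right.

Testing finally with the hat function of height `δ` centred at `b₀`, which vanishes at every other
point of `B`, gives `(m₁ - m₂) δ + β(b₀) p(b₀) δ = f(b₀) δ`: the flux jump condition.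
-/

theorem MeasureTheory.MemLp.intervalIntegrable {φ : ℝ → ℝ} {a b : ℝ} {p : ENNReal}
    (hab : a ≤ b) (hp : 1 ≤ p) (hφ : MemLp φ p (volume.restrict (Ioo a b))) :
    IntervalIntegrable φ volume a b :=
  (intervalIntegrable_iff_integrableOn_Ioo_of_le hab).2 (hφ.integrable hp)

theorem IntervalIntegrable.continuousAt_primitive {f : ℝ → ℝ} {a b c x : ℝ}
    (hf : IntervalIntegrable f volume a b) (hc : c ∈ uIcc a b) (hx : x ∈ Ioo a b) :
    ContinuousAt (fun y => ∫ t in c..y, f t) x :=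
  (intervalIntegral.continuousOn_primitive_interval' hf hc).continuousAt
    (mem_of_superset (Ioo_mem_nhds hx.1 hx.2) (Ioo_subset_Icc_self.trans Icc_subset_uIcc))

theorem IntervalIntegrable.continuousAt_integral_left {f : ℝ → ℝ} {a b c x : ℝ}
    (hf : IntervalIntegrable f volume a b) (hc : c ∈ uIcc a b) (hx : x ∈ Ioo a b) :
    ContinuousAt (fun y => ∫ t in y..c, f t) x :=
  (hf.continuousAt_primitive hc hx).neg.congr
    (Eventually.of_forall fun y => (intervalIntegral.integral_symm c y).symm)

theorem IntervalIntegrable.integral_eq_sub_of_mem_uIcc {f : ℝ → ℝ} {a b x y : ℝ}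
    (hf : IntervalIntegrable f volume a b) (hx : x ∈ uIcc a b) (hy : y ∈ uIcc a b) :
    ∫ t in y..b, f t = (∫ t in x..b, f t) - ∫ t in x..y, f t :=
  (intervalIntegral.integral_interval_sub_left (hf.mono_set (uIcc_subset_uIcc hx right_mem_uIcc))
    (hf.mono_set (uIcc_subset_uIcc hx hy))).symm

theorem integral_mul_primitive_eq_integral_mul_integral_left {F h : ℝ → ℝ} {a b : ℝ}
    (hF : IntervalIntegrable F volume a b) (hh : IntervalIntegrable h volume a b) :
    ∫ x in a..b, F x * ∫ t in a..x, h t = ∫ x in a..b, h x * ∫ t in x..b, F t := by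
  have deriv_ae {f : ℝ → ℝ} (hf : IntervalIntegrable f volume a b) {c : ℝ} (hc : c ∈ uIcc a b) :
      ∀ᵐ x, x ∈ uIoc a b → f x = deriv (fun y => ∫ t in c..y, f t) x := by
    filter_upwards [hf.ae_hasDerivAt_integral] with x hx hxab
    exact (hx (uIoc_subset_uIcc hxab) c hc).deriv.symm
  have parts := AbsolutelyContinuousOnInterval.integral_mul_deriv_eq_deriv_mul
    (hF.absolutelyContinuousOnInterval_intervalIntegral right_mem_uIcc)
    (hh.absolutelyContinuousOnInterval_intervalIntegral left_mem_uIcc)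
  simp only [intervalIntegral.integral_same, zero_mul, mul_zero, sub_zero, zero_sub] at parts
  calc ∫ x in a..b, F x * ∫ t in a..x, h t
      = ∫ x in a..b, deriv (fun y => ∫ t in b..y, F t) x * ∫ t in a..x, h t :=
        intervalIntegral.integral_congr_ae <| by
          filter_upwards [deriv_ae hF right_mem_uIcc] with x hx hxab using by rw [hx hxab]
    _ = -∫ x in a..b, (∫ t in b..x, F t) * deriv (fun y => ∫ t in a..y, h t) x := by
        rw [parts, neg_neg]
    _ = -∫ x in a..b, (∫ t in b..x, F t) * h x := by
        congr 1
        refine intervalIntegral.integral_congr_ae ?_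
        filter_upwards [deriv_ae hh left_mem_uIcc] with x hx hxab using by rw [hx hxab]
    _ = ∫ x in a..b, h x * ∫ t in x..b, F t := by
        rw [← intervalIntegral.integral_neg]
        refine intervalIntegral.integral_congr fun x _ => ?_
        simp only [intervalIntegral.integral_symm x b]
        ring

theorem ContinuousOn.memLp_restrict {X : Type*} [TopologicalSpace X] [T2Space X]
    [MeasurableSpace X] [OpensMeasurableSpace X] {μ : Measure X} [IsFiniteMeasureOnCompacts μ]
    {f : X → ℝ} {s : Set X} (hs : IsCompact s) (hf : ContinuousOn f s) (p : ENNReal) :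
    MemLp f p (μ.restrict s) := by
  have : IsFiniteMeasure (μ.restrict s) := isFiniteMeasure_restrict.2 hs.measure_lt_top.ne
  obtain ⟨C, hC⟩ := hs.exists_bound_of_continuousOn hf
  exact MemLp.of_bound (hf.aestronglyMeasurable_of_isCompact hs hs.isClosed.measurableSet) C
    (ae_restrict_of_forall_mem hs.isClosed.measurableSet hC)

theorem ae_eq_average_of_forall_integral_mul_eq_zero {α : Type*} [MeasurableSpace α]
    {μ : Measure α} [IsFiniteMeasure μ] {g : α → ℝ} (hg : MemLp g 2 μ)
    (h : ∀ φ : α → ℝ, MemLp φ 2 μ → ∫ x, φ x ∂μ = 0 → ∫ x, g x * φ x ∂μ = 0) :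
    g =ᵐ[μ] fun _ => ⨍ x, g x ∂μ := by
  set m := ⨍ x, g x ∂μ
  have hφ : MemLp (fun x => g x - m) 2 μ := hg.sub (memLp_const m)
  have hmean : ∫ x, g x - m ∂μ = 0 := integral_sub_average μ g
  have hsq : ∫ x, (g x - m) ^ 2 ∂μ = 0 := by
    have hgφ : Integrable (fun x => g x * (g x - m)) μ := hg.integrable_mul hφ
    have hmφ : Integrable (fun x => m * (g x - m)) μ := (hφ.integrable one_le_two).const_mul m
    calc ∫ x, (g x - m) ^ 2 ∂μ = ∫ x, g x * (g x - m) - m * (g x - m) ∂μ := by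
          congr 1; ext x; ring
      _ = 0 := by
        rw [integral_sub hgφ hmφ, h _ hφ hmean, integral_const_mul, hmean]; simp
  filter_upwards [(integral_eq_zero_iff_of_nonneg (fun x => sq_nonneg (g x - m))
    hφ.integrable_sq).1 hsq] with x hx
  simpa [sub_eq_zero] using hx

theorem intervalIntegral_eq_zero_of_notMem_Ioo {h : ℝ → ℝ} {a c x : ℝ} (ha : 0 ≤ a)
    (hsupp : ∀ t ∉ Ioo a c, h t = 0) (hmean : ∫ t, h t = 0) (hx : x ∉ Ioo a c) :
    ∫ t in 0..x, h t = 0 := by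
  rcases le_or_gt x a with hxa | hax
  · refine (intervalIntegral.integral_congr fun t ht => hsupp t fun htac => ?_).trans
      intervalIntegral.integral_zero
    exact (ht.2.trans (max_le ha hxa)).not_gt htac.1
  · have hcx : c ≤ x := not_lt.1 fun hxc => hx ⟨hax, hxc⟩
    rw [intervalIntegral.integral_of_le (ha.trans hax.le)]
    refine (setIntegral_eq_integral_of_forall_compl_eq_zero fun t ht => hsupp t fun htac =>
      ht ?_).trans hmean
    exact ⟨ha.trans_lt htac.1, htac.2.le.trans hcx⟩

/-- For `0 ≤ a - δ`, `fun x => ∫ t in 0..x, hatDeriv a δ t` is the hat function of height `δ`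
supported on `[a - δ, a + δ]`. -/
noncomputable def hatDeriv (a δ : ℝ) : ℝ → ℝ :=
  (Ioo (a - δ) a).indicator (fun _ => 1) - (Ioo a (a + δ)).indicator (fun _ => 1)

theorem integrable_hatDeriv (a δ : ℝ) : Integrable (hatDeriv a δ) :=
  ((integrable_indicator_iff measurableSet_Ioo).2 (integrableOn_const (by simp))).sub
    ((integrable_indicator_iff measurableSet_Ioo).2 (integrableOn_const (by simp)))

theorem memLp_hatDeriv (a δ : ℝ) (p : ENNReal) (μ : Measure ℝ) [IsFiniteMeasure μ] :
    MemLp (hatDeriv a δ) p μ := by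
  have h1 : MemLp (fun _ : ℝ => (1 : ℝ)) p μ := memLp_const 1
  exact (h1.indicator measurableSet_Ioo).sub (h1.indicator measurableSet_Ioo)

theorem integral_hatDeriv (a δ : ℝ) : ∫ x, hatDeriv a δ x = 0 := by
  simp [hatDeriv, integral_sub, integral_indicator_const, integrable_indicator_iff]

theorem hatDeriv_eq_zero_of_notMem {a δ x : ℝ} (hx : x ∉ Ioo (a - δ) (a + δ)) :
    hatDeriv a δ x = 0 := by
  have hL : x ∉ Ioo (a - δ) a := fun h => hx ⟨h.1, by linarith [h.1, h.2]⟩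
  have hR : x ∉ Ioo a (a + δ) := fun h => hx ⟨by linarith [h.1, h.2], h.2⟩
  simp [hatDeriv, hL, hR]

theorem intervalIntegral_hatDeriv_left {a δ : ℝ} (hδ : 0 ≤ δ) :
    ∫ x in (a - δ)..a, hatDeriv a δ x = δ := by
  rw [intervalIntegral.integral_of_le (by linarith), integral_Ioc_eq_integral_Ioo,
    setIntegral_congr_fun measurableSet_Ioo (g := fun _ => 1) fun x hx => ?_]
  · simp [hδ]
  · have hR : x ∉ Ioo a (a + δ) := fun h => h.1.not_gt hx.2
    simp [hatDeriv, hx, hR]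

theorem exists_radius_of_isolated {B : Set ℝ} {b₀ : ℝ} (hB : B ⊆ Ioo 0 1) (hb₀ : b₀ ∈ B)
    (hiso : ∃ δ₀ > (0:ℝ), Ioo (b₀ - δ₀) (b₀ + δ₀) ∩ B = {b₀}) :
    ∃ δ > 0, 0 ≤ b₀ - δ ∧ b₀ + δ ≤ 1 ∧ ∀ b ∈ B, b ∈ Ioo (b₀ - δ) (b₀ + δ) → b = b₀ := by
  obtain ⟨δ₀, hδ₀, hiso⟩ := hiso
  obtain ⟨hb₀0, hb₀1⟩ := hB hb₀
  refine ⟨min δ₀ (min b₀ (1 - b₀)), lt_min hδ₀ (lt_min hb₀0 (by linarith)), ?_, ?_,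
    fun b hb hbδ => ?_⟩
  · linarith [min_le_left b₀ (1 - b₀), min_le_right δ₀ (min b₀ (1 - b₀))]
  · linarith [min_le_right b₀ (1 - b₀), min_le_right δ₀ (min b₀ (1 - b₀))]
  · have hδδ₀ := min_le_left δ₀ (min b₀ (1 - b₀))
    have : b ∈ Ioo (b₀ - δ₀) (b₀ + δ₀) ∩ B := ⟨Ioo_subset_Ioo (by linarith) (by linarith) hbδ, hb⟩
    rwa [hiso] at this

theorem ae_eq_piecewise_add_integral_left {F p' : ℝ → ℝ} {b₀ δ m₁ m₂ : ℝ}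
    (hm₁ : ∀ᵐ x, x ∈ Ioo (b₀ - δ) b₀ → p' x - ∫ t in x..1, F t = m₁)
    (hm₂ : ∀ᵐ x, x ∈ Ioo b₀ (b₀ + δ) → p' x - ∫ t in x..1, F t = m₂) :
    (fun x => (if x < b₀ then m₁ else m₂) + ∫ t in x..1, F t)
      =ᵐ[volume.restrict (Ioo (b₀ - δ) (b₀ + δ))] p' := by
  refine (ae_restrict_iff' measurableSet_Ioo).2 ?_
  filter_upwards [hm₁, hm₂, compl_mem_ae_iff.2 (measure_singleton b₀)] with x hx₁ hx₂ hxb₀ hx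
  rcases lt_trichotomy x b₀ with hlt | heq | hgt
  · simp only [if_pos hlt, ← hx₁ ⟨hx.1, hlt⟩, sub_add_cancel]
  · exact absurd heq hxb₀
  · simp only [if_neg hgt.not_gt, ← hx₂ ⟨hgt, hx.2⟩, sub_add_cancel]

/-- The weak formulation of the scaled model; a test function `q ∈ V` is given through its
derivative `q' ∈ L²(0,1)` as `q x = ∫ t in 0..x, q' t`. -/
def IsWeakSolution (B : Set ℝ) (β f F p p' : ℝ → ℝ) : Prop :=
  ∀ q q' : ℝ → ℝ, MemLp q' 2 (volume.restrict (Ioo (0:ℝ) 1)) →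
    (∀ x, q x = ∫ t in (0:ℝ)..x, q' t) →
    (∫ x in Ioo (0:ℝ) 1, p' x * q' x) + (∑' b : B, β b * p b * q b)
      = (∫ x in Ioo (0:ℝ) 1, F x * q x) + ∑' b : B, f b * q b

namespace IsWeakSolution

variable {B : Set ℝ} {β f F p p' : ℝ → ℝ}

theorem integral_sub_integral_left_mul_add_tsum (hsol : IsWeakSolution B β f F p p')
    (hF : MemLp F 2 (volume.restrict (Ioo (0:ℝ) 1)))
    (hmem : MemLp p' 2 (volume.restrict (Ioo (0:ℝ) 1)))
    {h : ℝ → ℝ} (hh : MemLp h 2 (volume.restrict (Ioo (0:ℝ) 1))) :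
    (∫ x in (0:ℝ)..1, (p' x - ∫ t in x..1, F t) * h x)
        + ∑' b : B, β b * p b * ∫ t in (0:ℝ)..b, h t
      = ∑' b : B, f b * ∫ t in (0:ℝ)..b, h t := by
  have toInterval (φ : ℝ → ℝ) : ∫ x in Ioo (0:ℝ) 1, φ x = ∫ x in (0:ℝ)..1, φ x := by
    rw [intervalIntegral.integral_of_le zero_le_one, integral_Ioc_eq_integral_Ioo]
  have hFi := hF.intervalIntegrable zero_le_one one_le_two
  have hhi := hh.intervalIntegrable zero_le_one one_le_two
  have hp'h : IntervalIntegrable (fun x => p' x * h x) volume 0 1 :=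
    (intervalIntegrable_iff_integrableOn_Ioo_of_le zero_le_one).2 (hmem.integrable_mul hh)
  have key := hsol _ h hh fun _ => rfl
  rw [toInterval, toInterval, integral_mul_primitive_eq_integral_mul_integral_left hFi hhi] at key
  rw [intervalIntegral.integral_congr (g := fun x => p' x * h x - h x * ∫ t in x..1, F t)
      fun x _ => by ring,
    intervalIntegral.integral_sub hp'h (hhi.mul_continuousOn
      (intervalIntegral.continuousOn_primitive_interval_left ((intervalIntegrable_iff' ..).1 hFi)))]
  linarith

theorem exists_ae_eq_const_of_forall_notMem_Ioo (hsol : IsWeakSolution B β f F p p')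
    (hF : MemLp F 2 (volume.restrict (Ioo (0:ℝ) 1)))
    (hmem : MemLp p' 2 (volume.restrict (Ioo (0:ℝ) 1))) {u v : ℝ} (hu : 0 ≤ u) (hv : v ≤ 1)
    (hB : ∀ b ∈ B, b ∉ Ioo u v) :
    ∃ m : ℝ, ∀ᵐ x, x ∈ Ioo u v → p' x - ∫ t in x..1, F t = m := by
  have hsub : Ioo u v ⊆ Ioo 0 1 := Ioo_subset_Ioo hu hv
  have hFi := hF.intervalIntegrable zero_le_one one_le_two
  have hg : MemLp (fun x => p' x - ∫ t in x..1, F t) 2 (volume.restrict (Ioo u v)) :=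
    (hmem.mono_measure (Measure.restrict_mono hsub le_rfl)).sub
      (((intervalIntegral.continuousOn_primitive_interval_left
        ((intervalIntegrable_iff' ..).1 hFi)).memLp_restrict isCompact_uIcc 2).mono_measure
        (Measure.restrict_mono (hsub.trans (by simp [Ioo_subset_Icc_self])) le_rfl))
  refine ⟨_, (ae_restrict_iff' measurableSet_Ioo).1
    (ae_eq_average_of_forall_integral_mul_eq_zero hg fun φ hφ hφmean => ?_)⟩
  have hH : MemLp ((Ioo u v).indicator φ) 2 (volume.restrict (Ioo (0:ℝ) 1)) :=
    ((memLp_indicator_iff_restrict measurableSet_Ioo).2 hφ).mono_measure Measure.restrict_le_self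
  have hHmean : ∫ t, (Ioo u v).indicator φ t = 0 := by
    rwa [integral_indicator measurableSet_Ioo]
  have hq : ∀ b : B, ∫ t in (0:ℝ)..b, (Ioo u v).indicator φ t = 0 := fun b =>
    intervalIntegral_eq_zero_of_notMem_Ioo hu (fun t ht => indicator_of_notMem ht _) hHmean
      (hB b b.2)
  have key := hsol.integral_sub_integral_left_mul_add_tsum hF hmem hH
  simp only [hq, mul_zero, tsum_zero, add_zero] at key
  rw [← key, intervalIntegral.integral_of_le zero_le_one,
    setIntegral_congr_fun measurableSet_Ioc
      (g := (Ioo u v).indicator fun x => (p' x - ∫ t in x..1, F t) * φ x)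
      fun x _ => (indicator_mul_right _ _ _).symm,
    setIntegral_indicator measurableSet_Ioo,
    inter_eq_self_of_subset_right (hsub.trans Ioo_subset_Ioc_self)]

theorem jump_condition (hsol : IsWeakSolution B β f F p p')
    (hF : MemLp F 2 (volume.restrict (Ioo (0:ℝ) 1)))
    (hmem : MemLp p' 2 (volume.restrict (Ioo (0:ℝ) 1))) {b₀ δ m₁ m₂ : ℝ} (hb₀ : b₀ ∈ B)
    (hδ : 0 < δ) (h0 : 0 ≤ b₀ - δ) (h1 : b₀ + δ ≤ 1)
    (hiso : ∀ b ∈ B, b ∈ Ioo (b₀ - δ) (b₀ + δ) → b = b₀)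
    (hm₁ : ∀ᵐ x, x ∈ Ioo (b₀ - δ) b₀ → p' x - ∫ t in x..1, F t = m₁)
    (hm₂ : ∀ᵐ x, x ∈ Ioo b₀ (b₀ + δ) → p' x - ∫ t in x..1, F t = m₂) :
    m₁ - m₂ + β b₀ * p b₀ = f b₀ := by
  have hq_out : ∀ x ∉ Ioo (b₀ - δ) (b₀ + δ), ∫ t in (0:ℝ)..x, hatDeriv b₀ δ t = 0 :=
    fun x => intervalIntegral_eq_zero_of_notMem_Ioo h0 (fun _ => hatDeriv_eq_zero_of_notMem)
      (integral_hatDeriv b₀ δ)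
  have hq_b₀ : ∫ t in (0:ℝ)..b₀, hatDeriv b₀ δ t = δ := by
    rw [← intervalIntegral.integral_add_adjacent_intervals (b := b₀ - δ)
      (integrable_hatDeriv b₀ δ).intervalIntegrable (integrable_hatDeriv b₀ δ).intervalIntegrable,
      hq_out _ fun h => h.1.false, zero_add, intervalIntegral_hatDeriv_left hδ.le]
  have hqB : ∀ b : B, b ≠ ⟨b₀, hb₀⟩ → ∫ t in (0:ℝ)..b, hatDeriv b₀ δ t = 0 := fun b hb =>
    hq_out _ fun hbδ => hb (Subtype.ext (hiso b b.2 hbδ))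
  have hg_mul : (fun x => (p' x - ∫ t in x..1, F t) * hatDeriv b₀ δ x) =ᵐ[volume]
      (Ioo (b₀ - δ) b₀).indicator (fun _ => m₁) - (Ioo b₀ (b₀ + δ)).indicator (fun _ => m₂) := by
    filter_upwards [hm₁, hm₂] with x hx₁ hx₂
    by_cases hL : x ∈ Ioo (b₀ - δ) b₀ <;> by_cases hR : x ∈ Ioo b₀ (b₀ + δ)
    · exact absurd (hL.2.trans hR.1) (lt_irrefl _)
    all_goals simp [hatDeriv, hL, hR, hx₁, hx₂]
  have hgh : ∫ x in (0:ℝ)..1, (p' x - ∫ t in x..1, F t) * hatDeriv b₀ δ x = δ * m₁ - δ * m₂ := by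
    rw [intervalIntegral.integral_of_le zero_le_one, setIntegral_eq_integral_of_forall_compl_eq_zero
      fun x hx => ?_, integral_congr_ae hg_mul]
    · simp [integral_sub, integral_indicator_const, integrable_indicator_iff, hδ.le]
    · rw [hatDeriv_eq_zero_of_notMem fun hx' => hx ⟨h0.trans_lt hx'.1, hx'.2.le.trans h1⟩,
        mul_zero]
  have key := hsol.integral_sub_integral_left_mul_add_tsum hF hmem (memLp_hatDeriv b₀ δ 2 _)
  rw [tsum_eq_single ⟨b₀, hb₀⟩ fun b hb => by simp only [hqB b hb, mul_zero],
    tsum_eq_single ⟨b₀, hb₀⟩ fun b hb => by simp only [hqB b hb, mul_zero], hq_b₀, hgh] at key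
  exact mul_right_cancel₀ hδ.ne' (by linear_combination key)

end IsWeakSolution

theorem stmt17_general (B : Set ℝ) (hB : B ⊆ Set.Ioo (0:ℝ) 1)
    (β f : ℝ → ℝ)
    (F : ℝ → ℝ) (hF : MemLp F 2 (volume.restrict (Set.Ioo (0:ℝ) 1)))
    (p p' : ℝ → ℝ)
    (hmem : MemLp p' 2 (volume.restrict (Set.Ioo (0:ℝ) 1)))
    (hrep : ∀ x, p x = ∫ t in (0:ℝ)..x, p' t)
    (hsol : ∀ q q' : ℝ → ℝ, MemLp q' 2 (volume.restrict (Set.Ioo (0:ℝ) 1)) →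
      (∀ x, q x = ∫ t in (0:ℝ)..x, q' t) →
      (∫ x in Set.Ioo (0:ℝ) 1, p' x * q' x)
          + (∑' b : B, β (b : ℝ) * p (b : ℝ) * q (b : ℝ))
        = (∫ x in Set.Ioo (0:ℝ) 1, F x * q x) + ∑' b : B, f (b : ℝ) * q (b : ℝ))
    (b₀ : ℝ) (hb₀ : b₀ ∈ B)
    (hiso : ∃ δ₀ > (0:ℝ), Set.Ioo (b₀ - δ₀) (b₀ + δ₀) ∩ B = {b₀}) :
    ContinuousAt p b₀ ∧
    ∃ δ > (0:ℝ), ∃ w : ℝ → ℝ, ∃ pl pr : ℝ,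
      (w =ᵐ[volume.restrict (Set.Ioo (b₀ - δ) (b₀ + δ))] p') ∧
      (∀ x ∈ Set.Ioo (b₀ - δ) b₀, ∀ y ∈ Set.Ioo (b₀ - δ) b₀,
        w y = w x - ∫ t in x..y, F t) ∧
      (∀ x ∈ Set.Ioo b₀ (b₀ + δ), ∀ y ∈ Set.Ioo b₀ (b₀ + δ),
        w y = w x - ∫ t in x..y, F t) ∧
      Tendsto w (𝓝[<] b₀) (𝓝 pl) ∧ Tendsto w (𝓝[>] b₀) (𝓝 pr) ∧
      pl - pr + β b₀ * p b₀ = f b₀ := by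
  have hsol : IsWeakSolution B β f F p p' := hsol
  obtain ⟨δ, hδ, h0, h1, hisoδ⟩ := exists_radius_of_isolated hB hb₀ hiso
  obtain ⟨hb₀0, hb₀1⟩ := hB hb₀
  obtain ⟨m₁, hm₁⟩ := hsol.exists_ae_eq_const_of_forall_notMem_Ioo hF hmem h0 (by linarith)
    fun b hb hbL => hbL.2.ne (hisoδ b hb ⟨hbL.1, by linarith [hbL.2]⟩)
  obtain ⟨m₂, hm₂⟩ := hsol.exists_ae_eq_const_of_forall_notMem_Ioo hF hmem hb₀0.le h1
    fun b hb hbR => hbR.1.ne' (hisoδ b hb ⟨by linarith [hbR.1], hbR.2⟩)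
  have hFi := hF.intervalIntegrable zero_le_one one_le_two
  have hc : ContinuousAt (fun x => ∫ t in x..1, F t) b₀ :=
    hFi.continuousAt_integral_left right_mem_uIcc ⟨hb₀0, hb₀1⟩
  have hmem01 : ∀ x ∈ Ioo (b₀ - δ) (b₀ + δ), x ∈ uIcc (0:ℝ) 1 := fun x hx => by
    rw [uIcc_of_le zero_le_one]; exact ⟨by linarith [hx.1], by linarith [hx.2]⟩
  refine ⟨?_, δ, hδ, fun x => (if x < b₀ then m₁ else m₂) + ∫ t in x..1, F t,
    m₁ + ∫ t in b₀..1, F t, m₂ + ∫ t in b₀..1, F t, ae_eq_piecewise_add_integral_left hm₁ hm₂,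
    fun x hx y hy => ?_, fun x hx y hy => ?_, ?_, ?_, ?_⟩
  · rw [show p = _ from funext hrep]
    exact (hmem.intervalIntegrable zero_le_one one_le_two).continuousAt_primitive left_mem_uIcc
      ⟨hb₀0, hb₀1⟩
  · simp only [if_pos hx.2, if_pos hy.2, hFi.integral_eq_sub_of_mem_uIcc
      (hmem01 x ⟨hx.1, by linarith [hx.2]⟩) (hmem01 y ⟨hy.1, by linarith [hy.2]⟩)]
    ring
  · simp only [if_neg hx.1.not_gt, if_neg hy.1.not_gt, hFi.integral_eq_sub_of_mem_uIcc
      (hmem01 x ⟨by linarith [hx.1], hx.2⟩) (hmem01 y ⟨by linarith [hy.1], hy.2⟩)]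
    ring
  · exact (tendsto_const_nhds.add (hc.tendsto.mono_left nhdsWithin_le_nhds)).congr'
      (eventually_nhdsWithin_of_forall fun x (hx : x < b₀) => by simp only [if_pos hx])
  · exact (tendsto_const_nhds.add (hc.tendsto.mono_left nhdsWithin_le_nhds)).congr'
      (eventually_nhdsWithin_of_forall fun x (hx : b₀ < x) => by simp only [if_neg hx.not_gt])
  · linarith [hsol.jump_condition hF hmem hb₀ hδ h0 h1 hisoδ hm₁ hm₂]

/-- at an isolated point b₀ of the microstructure B, the solution p of the
scaled model is continuous, p' has an L² representative w with second-derivative −F (i.e.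
w(y) = w(x) − ∫ₓʸ F) on each side of b₀, the one-sided limits p'(b₀⁻), p'(b₀⁺) exist and
the flux jump condition p'(b₀⁻) − p'(b₀⁺) + β(b₀) p(b₀) = f(b₀) holds. -/
theorem stmt17 (B : Set ℝ) (hBcount : B.Countable) (hB : B ⊆ Set.Ioo (0:ℝ) 1)
    (β f : ℝ → ℝ)
    (hβsum : Summable (fun b : B => |β (b : ℝ)|))
    (hfsum : Summable (fun b : B => |f (b : ℝ)|))
    (F : ℝ → ℝ) (hF : MemLp F 2 (volume.restrict (Set.Ioo (0:ℝ) 1)))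
    (p p' : ℝ → ℝ)
    (hmem : MemLp p' 2 (volume.restrict (Set.Ioo (0:ℝ) 1)))
    (hrep : ∀ x, p x = ∫ t in (0:ℝ)..x, p' t)
    (hsol : ∀ q q' : ℝ → ℝ, MemLp q' 2 (volume.restrict (Set.Ioo (0:ℝ) 1)) →
      (∀ x, q x = ∫ t in (0:ℝ)..x, q' t) →
      (∫ x in Set.Ioo (0:ℝ) 1, p' x * q' x)
          + (∑' b : B, β (b : ℝ) * p (b : ℝ) * q (b : ℝ))
        = (∫ x in Set.Ioo (0:ℝ) 1, F x * q x) + ∑' b : B, f (b : ℝ) * q (b : ℝ))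
    (b₀ : ℝ) (hb₀ : b₀ ∈ B)
    (hiso : ∃ δ₀ > (0:ℝ), Set.Ioo (b₀ - δ₀) (b₀ + δ₀) ∩ B = {b₀}) :
    ContinuousAt p b₀ ∧
    ∃ δ > (0:ℝ), ∃ w : ℝ → ℝ, ∃ pl pr : ℝ,
      (w =ᵐ[volume.restrict (Set.Ioo (b₀ - δ) (b₀ + δ))] p') ∧
      (∀ x ∈ Set.Ioo (b₀ - δ) b₀, ∀ y ∈ Set.Ioo (b₀ - δ) b₀,
        w y = w x - ∫ t in x..y, F t) ∧
      (∀ x ∈ Set.Ioo b₀ (b₀ + δ), ∀ y ∈ Set.Ioo b₀ (b₀ + δ),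
        w y = w x - ∫ t in x..y, F t) ∧
      Tendsto w (𝓝[<] b₀) (𝓝 pl) ∧ Tendsto w (𝓝[>] b₀) (𝓝 pr) ∧
      pl - pr + β b₀ * p b₀ = f b₀ :=
  stmt17_general B hB β f F hF p p' hmem hrep hsol b₀ hb₀ hiso
end
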